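/- Fix D. There exists a finite set of natural numbers {N₁,…,N_M} (depending only on D) such that for every d and every d-tuple 𝒜 of D×D complex matrices: if 𝒜 is N-injective for some N, then 𝒜 is N_i-injective for some i ∈ {1,…,M}. In particular the bound can be chosen independently of d. -/

import Mathlib

/-- `𝒜` is `N`-injective if the length-`N` products of its matrices span
all of `M_D(ℂ)`. -/
def NInjective {D d : ℕ} (A : Fin d → Matrix (Fin D) (Fin D) ℂ) (N : ℕ) : Prop :=
  Submodule.span ℂ
    {M | ∃ i : Fin N → Fin d, M = (List.ofFn fun k => A (i k)).prod} = ⊤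

/-!
`N`-injectivity of `𝒜` only depends on `V = span 𝒜`, and `V` is spanned by some family `B` of
`D²` matrices. For such `B`, `V ^ N = ⊤` holds iff some `D²` words of length `N` in `B` form a
basis, i.e. iff one of the polynomials `wordDet s` (the determinant of `D²` words in generic
matrices) does not vanish at `B`. By the Hilbert basis theorem the ideals generated by these
polynomials for all lengths `≤ N` stabilise at some `N₀` independent of `B`, so lengths `≤ N₀`
already detect injectivity.
-/

open Submodule MvPolynomial Module Pointwise

theorem Set.setOf_list_prod_ofFn_eq_range_pow {M ι : Type*} [Monoid M] (A : ι → M) (N : ℕ) :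
    {x | ∃ i : Fin N → ι, x = (List.ofFn fun k => A (i k)).prod} = Set.range A ^ N := by
  ext x
  rw [Set.mem_ofPred_eq, Set.mem_pow]
  constructor
  · rintro ⟨i, rfl⟩
    exact ⟨fun k => ⟨A (i k), i k, rfl⟩, rfl⟩
  · rintro ⟨f, rfl⟩
    choose i hi using fun k => (f k).2
    exact ⟨i, by simp only [hi]⟩

theorem nInjective_iff_span_pow_eq_top {D d : ℕ} (A : Fin d → Matrix (Fin D) (Fin D) ℂ) (N : ℕ) :
    NInjective A N ↔ span ℂ (Set.range A) ^ N = ⊤ := by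
  rw [NInjective, Set.setOf_list_prod_ofFn_eq_range_pow, span_pow]

theorem Module.Basis.exists_span_range_eq {K M ι : Type*} [Field K] [AddCommGroup M] [Module K M]
    (b : Basis ι K M) (V : Submodule K M) : ∃ B : ι → M, span K (Set.range B) = V := by
  obtain ⟨g, hg⟩ := V.subtype.exists_leftInverse_of_injective V.ker_subtype
  have hg_surj : Function.Surjective g := fun x => ⟨x, LinearMap.congr_fun hg x⟩
  refine ⟨V.subtype ∘ g ∘ b, ?_⟩
  rw [Set.range_comp, Set.range_comp, ← map_span, ← map_span, b.span_eq,
    Submodule.map_top, LinearMap.range_eq_top.2 hg_surj, Submodule.map_top, range_subtype]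

theorem Module.Basis.span_eq_top_iff_exists_det_ne_zero {K M ι : Type*} [Field K] [AddCommGroup M]
    [Module K M] [Fintype ι] [DecidableEq ι] (b : Basis ι K M) (S : Set M) :
    span K S = ⊤ ↔ ∃ v : ι → M, (∀ i, v i ∈ S) ∧ b.det v ≠ 0 := by
  constructor
  · intro hS
    obtain ⟨t, htS, hspan, hli⟩ := exists_linearIndependent K S
    let bt : Basis t K M := Basis.mk hli (by rw [Subtype.range_coe, hspan, hS])
    let e := bt.reindex (bt.indexEquiv b)
    refine ⟨e, fun i => htS ?_, (b.isUnit_det e).ne_zero⟩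
    simp [e, bt]
  · rintro ⟨v, hvS, hv⟩
    have hspan := ((b.is_basis_iff_det).2 (isUnit_iff_ne_zero.2 hv)).2
    exact eq_top_iff.2 (hspan.ge.trans (span_mono (Set.range_subset_iff.2 hvS)))

theorem IsNoetherianRing.exists_bound_forall_subset_ideal {R : Type*} [Semiring R]
    [IsNoetherianRing R] (S : ℕ → Set R) :
    ∃ N₀, ∀ J : Ideal R, (∀ m ≤ N₀, S m ⊆ J) → ∀ N, S N ⊆ J := by
  let I : ℕ →o Ideal R := ⟨fun N => Ideal.span (⋃ m ≤ N, S m), fun a b hab =>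
    Ideal.span_mono (Set.biUnion_subset_biUnion_left (Set.Iic_subset_Iic.2 hab))⟩
  obtain ⟨N₀, hN₀⟩ := monotone_stabilizes_iff_noetherian.mpr inferInstance I
  refine ⟨N₀, fun J hJ N x hx => ?_⟩
  have hIJ : I N₀ ≤ J := Ideal.span_le.2 (Set.iUnion₂_subset hJ)
  have hI : I N ≤ I N₀ := (le_total N N₀).elim (fun h => I.monotone h) fun h => (hN₀ N h).ge
  exact hIJ (hI (Ideal.subset_span (Set.mem_iUnion₂.2 ⟨N, le_rfl, hx⟩)))

theorem Matrix.stdBasis_repr_apply {R m n : Type*} [Semiring R] [Fintype m] [Finite n]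
    (M : Matrix m n R) (p : m × n) : (Matrix.stdBasis R m n).repr M p = M p.1 p.2 := by
  simp [Matrix.stdBasis]

section GenericWords

variable (K : Type*) [Field K] {n ι : Type*}

noncomputable def genericMatrix (k : ι) : Matrix n n (MvPolynomial (ι × n × n) K) :=
  Matrix.of fun i j => X (k, i, j)

variable {K}

noncomputable def evalAt (B : ι → Matrix n n K) : MvPolynomial (ι × n × n) K →+* K :=
  eval fun v => B v.1 v.2.1 v.2.2

theorem genericMatrix_map_evalAt (B : ι → Matrix n n K) (k : ι) :
    (genericMatrix K k).map (evalAt B) = B k := by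
  ext i j
  simp [genericMatrix, evalAt]

variable [Fintype n] [DecidableEq n]

variable (K) in
noncomputable def wordDet {N : ℕ} (s : n × n → Fin N → ι) : MvPolynomial (ι × n × n) K :=
  Matrix.det (Matrix.of fun p q => (List.ofFn fun k => genericMatrix K (s q k)).prod p.1 p.2)

theorem evalAt_wordDet (B : ι → Matrix n n K) {N : ℕ} (s : n × n → Fin N → ι) :
    evalAt B (wordDet K s) =
      (Matrix.stdBasis K n n).det fun q => (List.ofFn fun k => B (s q k)).prod := by
  rw [wordDet, RingHom.map_det, Basis.det_apply]
  congr
  ext p q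
  have hword : (evalAt B).mapMatrix (List.ofFn fun k => genericMatrix K (s q k)).prod =
      (List.ofFn fun k => B (s q k)).prod := by
    simp [map_list_prod, List.map_ofFn, Function.comp_def, genericMatrix_map_evalAt]
  simpa [Basis.toMatrix_apply, Matrix.stdBasis_repr_apply] using congrFun₂ hword p.1 p.2

theorem span_pow_eq_top_iff_exists_evalAt_wordDet_ne_zero (B : ι → Matrix n n K) (N : ℕ) :
    span K (Set.range B) ^ N = ⊤ ↔ ∃ s : n × n → Fin N → ι, evalAt B (wordDet K s) ≠ 0 := by
  rw [span_pow, ← Set.setOf_list_prod_ofFn_eq_range_pow,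
    (Matrix.stdBasis K n n).span_eq_top_iff_exists_det_ne_zero]
  simp only [evalAt_wordDet]
  constructor
  · rintro ⟨v, hv, hdet⟩
    choose s hs using hv
    exact ⟨s, by rwa [← funext hs]⟩
  · rintro ⟨s, hs⟩
    exact ⟨_, fun q => ⟨s q, rfl⟩, hs⟩

end GenericWords

theorem exists_bound_pow_eq_top (K n : Type*) [Field K] [Fintype n] [DecidableEq n] :
    ∃ N₀, ∀ (V : Submodule K (Matrix n n K)) (N : ℕ), V ^ N = ⊤ → ∃ m ≤ N₀, V ^ m = ⊤ := by
  obtain ⟨N₀, hN₀⟩ := IsNoetherianRing.exists_bound_forall_subset_ideal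
    fun N => Set.range (wordDet K (n := n) (ι := n × n) (N := N))
  refine ⟨N₀, fun V N hV => ?_⟩
  obtain ⟨B, rfl⟩ := (Matrix.stdBasis K n n).exists_span_range_eq V
  simp only [span_pow_eq_top_iff_exists_evalAt_wordDet_ne_zero] at hV ⊢
  by_contra! h
  obtain ⟨s, hs⟩ := hV
  exact hs (hN₀ (RingHom.ker (evalAt B)) (fun m hm => Set.range_subset_iff.2 (h m hm)) N ⟨s, rfl⟩)

theorem quantum_wielandt_uniform (D : ℕ) :
    ∃ F : Finset ℕ, ∀ d : ℕ, ∀ A : Fin d → Matrix (Fin D) (Fin D) ℂ,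
      (∃ N : ℕ, NInjective A N) → ∃ Ni ∈ F, NInjective A Ni := by
  obtain ⟨N₀, hN₀⟩ := exists_bound_pow_eq_top ℂ (Fin D)
  refine ⟨Finset.range (N₀ + 1), fun d A ⟨N, hN⟩ => ?_⟩
  rw [nInjective_iff_span_pow_eq_top] at hN
  obtain ⟨m, hm, hVm⟩ := hN₀ _ N hN
  exact ⟨m, Finset.mem_range.2 (Nat.lt_succ_of_le hm), (nInjective_iff_span_pow_eq_top A m).2 hVm⟩
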